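/- Let (X, d) be a Polish metric space whose distance is geodesically convex in the following sense: for all x, y, z, u ∈ X and t ∈ [0, 1], if d(x, y) = t·d(x, z) and d(y, z) = (1 − t)·d(x, z), then d(u, y) ≤ (1 − t)·d(u, x) + t·d(u, z). Let Q, P₀, P₁, P_t be Borel probability measures on X with finite first moments, let t ∈ [0, 1], and suppose there exists a probability measure π₃ on X × X × X whose three marginals are P₀, P_t, P₁ respectively and such that, π₃-almost surely in (x, y, z), d(x, y) = t·d(x, z) and d(y, z) = (1 − t)·d(x, z). Suppose moreover that there exist couplings of Q with P₀ and of Q with P₁ attaining W₁(Q, P₀) and W₁(Q, P₁). Then W₁(Q, P_t) ≤ (1 − t)·W₁(Q, P₀) + t·W₁(Q, P₁) + 4·t·(1 − t)·inf_{u₀ ∈ X} E_{u∼Q}[ d(u, u₀) ]. -/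

import Mathlib

/-!
Glue an optimal coupling of `(Q, P₀)` to `π₃` along their common marginal `P₀`: this produces
random points `(u, x, y, z)` with `u ∼ Q`, `(x, y, z) ∼ π₃` and `E d(u, x) = W₁(Q, P₀)`. Geodesic
convexity of `d(u, ·)` gives `d(u, y) ≤ (1 - t) d(u, x) + t d(u, z)`, and routing through `u₀`,
`E d(u, z) ≤ E d(u, u₀) + E d(z, u₀) ≤ 2 m + W₁(Q, P₁)` with `m = E_{u∼Q} d(u, u₀)`. So `(u, y)`
couples `Q` and `P_t` at cost `≤ (1 - t) W₁(Q, P₀) + t (2 m + W₁(Q, P₁))`. Gluing along `P₁`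
instead gives `t W₁(Q, P₁) + (1 - t) (2 m + W₁(Q, P₀))`, and the average of the two bounds with
weights `1 - t, t` is the claim.
-/

open MeasureTheory TopologicalSpace
open ProbabilityTheory
open scoped ENNReal

/-- `π` is a coupling of `Q` and `P` : its marginals are `Q` and `P`. -/
def IsCoupling {X : Type*} [MeasurableSpace X] (π : Measure (X × X))
    (Q P : Measure X) : Prop :=
  π.map Prod.fst = Q ∧ π.map Prod.snd = P

/-- The 1-Wasserstein distance: infimum of `∫ d(x,y) dπ` over couplings `π` of `Q, P`. -/
noncomputable def W1 {X : Type*} [MetricSpace X] [MeasurableSpace X]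
    (Q P : Measure X) : ℝ :=
  sInf {r | ∃ π : Measure (X × X), IsCoupling π Q P ∧ r = ∫ p, dist p.1 p.2 ∂π}

namespace MeasureTheory.Measure

variable {A B C : Type*} [MeasurableSpace A] [MeasurableSpace B] [MeasurableSpace C]

lemma map_prodMap_compProd_comap (μ : Measure A) [SFinite μ] (κ : Kernel B C)
    [IsSFiniteKernel κ] {f : A → B} (hf : Measurable f) :
    (μ ⊗ₘ κ.comap f hf).map (Prod.map f id) = μ.map f ⊗ₘ κ := by
  ext s hs
  rw [map_apply (hf.prodMap measurable_id) hs, compProd_apply (hf.prodMap measurable_id hs),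
    compProd_apply hs, lintegral_map (Kernel.measurable_kernel_prodMk_left hs) hf]
  rfl

theorem exists_fst_eq_map_prodMap_eq [StandardBorelSpace C] [Nonempty C]
    (μ : Measure A) [IsFiniteMeasure μ] {f : A → B} (hf : Measurable f)
    (ρ : Measure (B × C)) [IsFiniteMeasure ρ] (h : μ.map f = ρ.fst) :
    ∃ ν : Measure (A × C), ν.fst = μ ∧ ν.map (Prod.map f id) = ρ :=
  ⟨μ ⊗ₘ ρ.condKernel.comap f hf, fst_compProd _ _, by
    rw [map_prodMap_compProd_comap _ _ hf, h, disintegrate]⟩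

end MeasureTheory.Measure

section Coupling

variable {X : Type*} [MeasurableSpace X]

lemma IsCoupling.isProbabilityMeasure {π : Measure (X × X)} {Q P : Measure X}
    [IsProbabilityMeasure Q] (hπ : IsCoupling π Q P) : IsProbabilityMeasure π := by
  have : IsProbabilityMeasure (π.map Prod.fst) := hπ.1 ▸ ‹_›
  exact Measure.isProbabilityMeasure_of_map Prod.fst

variable [PseudoEMetricSpace X] [BorelSpace X] [SecondCountableTopology X]

lemma lintegral_edist_le_of_isCoupling {π : Measure (X × X)} {Q P : Measure X}
    (hπ : IsCoupling π Q P) (x₀ : X) :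
    ∫⁻ y, edist y x₀ ∂P ≤ ∫⁻ x, edist x x₀ ∂Q + ∫⁻ p, edist p.1 p.2 ∂π := by
  rw [← hπ.1, ← hπ.2, lintegral_map (by fun_prop) measurable_fst,
    lintegral_map (by fun_prop) measurable_snd,
    ← lintegral_add_left (measurable_fst.edist measurable_const)]
  exact lintegral_mono fun p => (edist_triangle_left _ _ _).trans_eq (add_comm _ _)

theorem exists_isCoupling_lintegral_edist_le [StandardBorelSpace X] [Nonempty X]
    {Ω : Type*} [MeasurableSpace Ω] (μ : Measure Ω) [IsFiniteMeasure μ]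
    {x y z : Ω → X} (hx : Measurable x) (hy : Measurable y) (hz : Measurable z)
    {Q P₀ Pt P₁ : Measure X} (hμx : μ.map x = P₀) (hμy : μ.map y = Pt) (hμz : μ.map z = P₁)
    {a b : ℝ≥0∞}
    (hconv : ∀ᵐ ω ∂μ, ∀ u, edist u (y ω) ≤ a * edist u (x ω) + b * edist u (z ω))
    {π₀ π₁ : Measure (X × X)} [IsFiniteMeasure π₀]
    (hπ₀ : IsCoupling π₀ Q P₀) (hπ₁ : IsCoupling π₁ Q P₁) (x₀ : X) :
    ∃ γ : Measure (X × X), IsCoupling γ Q Pt ∧ ∫⁻ p, edist p.1 p.2 ∂γ ≤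
      a * ∫⁻ p, edist p.1 p.2 ∂π₀ + b * (2 * ∫⁻ u, edist u x₀ ∂Q + ∫⁻ p, edist p.1 p.2 ∂π₁) := by
  -- `ν` is a law of `(ω, u)` with `ω ∼ μ` and `(u, x ω) ∼ π₀`; `γ` will be the law of `(u, y ω)`.
  obtain ⟨ν, hν, hνπ₀⟩ := Measure.exists_fst_eq_map_prodMap_eq μ hx (π₀.map Prod.swap)
    (by rw [Measure.fst_map_swap, hμx]; exact hπ₀.2.symm)
  have hνQ : ν.map Prod.snd = Q := by
    have h := congrArg Measure.snd hνπ₀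
    rw [Measure.snd_map_swap, Measure.snd, Measure.map_map measurable_snd
      (hx.prodMap measurable_id)] at h
    exact h.trans hπ₀.1
  have hν_comp {w : Ω → X} (hw : Measurable w) : ν.map (fun p => w p.1) = μ.map w := by
    rw [← hν, Measure.fst, Measure.map_map hw measurable_fst]
    rfl
  have hνx : ∫⁻ p, edist p.2 (x p.1) ∂ν = ∫⁻ p, edist p.1 p.2 ∂π₀ := by
    have h := lintegral_map (μ := ν) (f := fun q : X × X => edist q.2 q.1) (by fun_prop)
      (hx.prodMap measurable_id)
    rw [hνπ₀, lintegral_map (by fun_prop) measurable_swap] at h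
    exact h.symm
  have hνz : ∫⁻ p, edist p.2 (z p.1) ∂ν ≤ 2 * ∫⁻ u, edist u x₀ ∂Q + ∫⁻ p, edist p.1 p.2 ∂π₁ :=
    calc ∫⁻ p, edist p.2 (z p.1) ∂ν
        ≤ ∫⁻ p, edist p.2 x₀ + edist (z p.1) x₀ ∂ν :=
          lintegral_mono fun p => edist_triangle_right _ _ _
      _ = ∫⁻ u, edist u x₀ ∂Q + ∫⁻ v, edist v x₀ ∂P₁ := by
          rw [lintegral_add_left (by fun_prop), ← hνQ, ← hμz, ← hν_comp hz,
            lintegral_map (by fun_prop) measurable_snd,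
            lintegral_map (by fun_prop) (by fun_prop : Measurable fun p : Ω × X => z p.1)]
      _ ≤ 2 * ∫⁻ u, edist u x₀ ∂Q + ∫⁻ p, edist p.1 p.2 ∂π₁ := by
          rw [two_mul, add_assoc]
          gcongr
          exact lintegral_edist_le_of_isCoupling hπ₁ x₀
  refine ⟨ν.map fun p => (p.2, y p.1), ⟨?_, ?_⟩, ?_⟩
  · rw [Measure.map_map measurable_fst (by fun_prop)]
    exact hνQ
  · rw [Measure.map_map measurable_snd (by fun_prop), ← hμy]
    exact hν_comp hy
  · have hconvν : ∀ᵐ p ∂ν, edist p.2 (y p.1) ≤ a * edist p.2 (x p.1) + b * edist p.2 (z p.1) := by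
      rw [← hν] at hconv
      exact (ae_of_ae_map measurable_fst.aemeasurable hconv).mono fun p hp => hp p.2
    calc ∫⁻ p, edist p.1 p.2 ∂(ν.map fun p => (p.2, y p.1))
        = ∫⁻ p, edist p.2 (y p.1) ∂ν := lintegral_map (by fun_prop) (by fun_prop)
      _ ≤ ∫⁻ p, a * edist p.2 (x p.1) + b * edist p.2 (z p.1) ∂ν := lintegral_mono_ae hconvν
      _ = a * ∫⁻ p, edist p.2 (x p.1) ∂ν + b * ∫⁻ p, edist p.2 (z p.1) ∂ν := by
          rw [lintegral_add_left (by fun_prop), lintegral_const_mul _ (by fun_prop),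
            lintegral_const_mul _ (by fun_prop)]
      _ ≤ _ := by rw [hνx]; gcongr

end Coupling

section FirstMoment

lemma lintegral_edist_eq_ofReal_integral_dist {X Ω : Type*} [PseudoMetricSpace X]
    [MeasurableSpace Ω] {μ : Measure Ω} {f g : Ω → X}
    (h : Integrable (fun ω => dist (f ω) (g ω)) μ) :
    ∫⁻ ω, edist (f ω) (g ω) ∂μ = ENNReal.ofReal (∫ ω, dist (f ω) (g ω) ∂μ) := by
  simp_rw [edist_dist]
  exact (ofReal_integral_eq_lintegral_ofReal h (ae_of_all _ fun _ => dist_nonneg)).symm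

variable {X : Type*} [PseudoMetricSpace X] [MeasurableSpace X] [BorelSpace X]

lemma integrable_dist_of_exists_integrable_dist {μ : Measure X} [IsFiniteMeasure μ]
    (h : ∃ x₀, Integrable (fun x => dist x x₀) μ) (y : X) : Integrable (fun x => dist x y) μ :=
  let ⟨x₀, h⟩ := h
  (h.add (integrable_const (dist x₀ y))).mono' (by fun_prop)
    (ae_of_all _ fun x => by simpa using dist_triangle x x₀ y)

variable [SecondCountableTopology X]

lemma integrable_dist_of_isCoupling {π : Measure (X × X)} {Q P : Measure X}
    (hπ : IsCoupling π Q P) {x₀ : X} (hQ : Integrable (fun x => dist x x₀) Q)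
    (hP : Integrable (fun x => dist x x₀) P) : Integrable (fun p : X × X => dist p.1 p.2) π := by
  have h₁ := (hπ.1 ▸ hQ).comp_measurable measurable_fst
  have h₂ := (hπ.2 ▸ hP).comp_measurable measurable_snd
  exact (h₁.add h₂).mono' (by fun_prop)
    (ae_of_all _ fun p => by simpa using dist_triangle_right p.1 p.2 x₀)

end FirstMoment

section Wasserstein

variable {X : Type*} [MetricSpace X] [MeasurableSpace X]

lemma W1_le_integral_dist {π : Measure (X × X)} {Q P : Measure X} (hπ : IsCoupling π Q P) :
    W1 Q P ≤ ∫ p, dist p.1 p.2 ∂π :=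
  csInf_le ⟨0, by rintro r ⟨π', -, rfl⟩; exact integral_nonneg fun _ => dist_nonneg⟩ ⟨π, hπ, rfl⟩

variable [BorelSpace X] [SecondCountableTopology X]

lemma W1_le_of_lintegral_edist_le {π : Measure (X × X)} {Q P : Measure X}
    (hπ : IsCoupling π Q P) {c : ℝ} (hc : 0 ≤ c)
    (h : ∫⁻ p, edist p.1 p.2 ∂π ≤ ENNReal.ofReal c) : W1 Q P ≤ c := by
  refine (W1_le_integral_dist hπ).trans ?_
  rw [integral_eq_lintegral_of_nonneg_ae (ae_of_all _ fun _ => dist_nonneg) (by fun_prop)]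
  simp_rw [← edist_dist]
  exact ENNReal.toReal_le_of_le_ofReal hc h

theorem W1_le_of_ae_dist_le [StandardBorelSpace X] [Nonempty X]
    {Ω : Type*} [MeasurableSpace Ω] (μ : Measure Ω) [IsFiniteMeasure μ]
    {x y z : Ω → X} (hx : Measurable x) (hy : Measurable y) (hz : Measurable z)
    {Q P₀ Pt P₁ : Measure X} (hμx : μ.map x = P₀) (hμy : μ.map y = Pt) (hμz : μ.map z = P₁)
    {a b : ℝ} (ha : 0 ≤ a) (hb : 0 ≤ b)
    (hconv : ∀ᵐ ω ∂μ, ∀ u, dist u (y ω) ≤ a * dist u (x ω) + b * dist u (z ω))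
    {π₀ π₁ : Measure (X × X)} [IsFiniteMeasure π₀]
    (hπ₀ : IsCoupling π₀ Q P₀) (hπ₁ : IsCoupling π₁ Q P₁) {x₀ : X}
    (hQ : Integrable (fun u => dist u x₀) Q) (hP₀ : Integrable (fun u => dist u x₀) P₀)
    (hP₁ : Integrable (fun u => dist u x₀) P₁) :
    W1 Q Pt ≤ a * ∫ p, dist p.1 p.2 ∂π₀
      + b * (2 * ∫ u, dist u x₀ ∂Q + ∫ p, dist p.1 p.2 ∂π₁) := by
  have hconvₑ : ∀ᵐ ω ∂μ, ∀ u, edist u (y ω) ≤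
      ENNReal.ofReal a * edist u (x ω) + ENNReal.ofReal b * edist u (z ω) := by
    refine hconv.mono fun ω h u => ?_
    simp_rw [edist_dist]
    refine (ENNReal.ofReal_le_ofReal (h u)).trans_eq ?_
    rw [ENNReal.ofReal_add (by positivity) (by positivity), ENNReal.ofReal_mul ha,
      ENNReal.ofReal_mul hb]
  obtain ⟨γ, hγ, hcost⟩ := exists_isCoupling_lintegral_edist_le μ hx hy hz hμx hμy hμz hconvₑ
    hπ₀ hπ₁ x₀
  refine W1_le_of_lintegral_edist_le hγ (by positivity) (hcost.trans_eq ?_)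
  rw [lintegral_edist_eq_ofReal_integral_dist (integrable_dist_of_isCoupling hπ₀ hQ hP₀),
    lintegral_edist_eq_ofReal_integral_dist (integrable_dist_of_isCoupling hπ₁ hQ hP₁),
    lintegral_edist_eq_ofReal_integral_dist hQ, ← ENNReal.ofReal_ofNat 2,
    ← ENNReal.ofReal_mul ha, ← ENNReal.ofReal_mul zero_le_two,
    ← ENNReal.ofReal_add, ← ENNReal.ofReal_mul hb, ← ENNReal.ofReal_add] <;> positivity

end Wasserstein

theorem w1_almost_convex_along_displacement_general
    {X : Type*} [MetricSpace X] [SeparableSpace X] [CompleteSpace X]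
    [MeasurableSpace X] [BorelSpace X]
    (hgeo : ∀ x y z u : X, ∀ s ∈ Set.Icc (0 : ℝ) 1,
      dist x y = s * dist x z → dist y z = (1 - s) * dist x z →
      dist u y ≤ (1 - s) * dist u x + s * dist u z)
    (Q P₀ P₁ Pt : Measure X)
    [IsProbabilityMeasure Q] [IsProbabilityMeasure P₀]
    [IsProbabilityMeasure P₁]
    (hQm : ∃ x₀, Integrable (fun x => dist x x₀) Q)
    (h₀m : ∃ x₀, Integrable (fun x => dist x x₀) P₀)
    (h₁m : ∃ x₀, Integrable (fun x => dist x x₀) P₁)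
    (t : ℝ) (ht : t ∈ Set.Icc (0 : ℝ) 1)
    (π₃ : Measure (X × X × X))
    (hm₁ : π₃.map (fun q => q.1) = P₀)
    (hm₂ : π₃.map (fun q => q.2.1) = Pt)
    (hm₃ : π₃.map (fun q => q.2.2) = P₁)
    (hdisp : ∀ᵐ q ∂π₃, dist q.1 q.2.1 = t * dist q.1 q.2.2 ∧
      dist q.2.1 q.2.2 = (1 - t) * dist q.1 q.2.2)
    (hopt₀ : ∃ π : Measure (X × X), IsCoupling π Q P₀ ∧
      (∫ p, dist p.1 p.2 ∂π) = W1 Q P₀)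
    (hopt₁ : ∃ π : Measure (X × X), IsCoupling π Q P₁ ∧
      (∫ p, dist p.1 p.2 ∂π) = W1 Q P₁) :
    W1 Q Pt ≤ (1 - t) * W1 Q P₀ + t * W1 Q P₁
      + 4 * t * (1 - t) * ⨅ u₀ : X, ∫ u, dist u u₀ ∂Q := by
  obtain ⟨π₀, hπ₀, hW₀⟩ := hopt₀
  obtain ⟨π₁, hπ₁, hW₁⟩ := hopt₁
  have : Nonempty X := hQm.nonempty
  have : IsProbabilityMeasure π₀ := hπ₀.isProbabilityMeasure
  have : IsProbabilityMeasure π₁ := hπ₁.isProbabilityMeasure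
  have : IsProbabilityMeasure (π₃.map fun q => q.1) := hm₁ ▸ ‹_›
  have : IsProbabilityMeasure π₃ := Measure.isProbabilityMeasure_of_map fun q => q.1
  have hconv : ∀ᵐ q ∂π₃, ∀ u, dist u q.2.1 ≤ (1 - t) * dist u q.1 + t * dist u q.2.2 :=
    hdisp.mono fun q hq u => hgeo _ _ _ u t ht hq.1 hq.2
  have hQ := integrable_dist_of_exists_integrable_dist hQm
  have hP₀ := integrable_dist_of_exists_integrable_dist h₀m
  have hP₁ := integrable_dist_of_exists_integrable_dist h₁m
  have h1t : 0 ≤ 1 - t := sub_nonneg.2 ht.2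
  have key (u₀ : X) : W1 Q Pt ≤ (1 - t) * W1 Q P₀ + t * W1 Q P₁
      + 4 * t * (1 - t) * ∫ u, dist u u₀ ∂Q := by
    have hfwd := W1_le_of_ae_dist_le π₃ measurable_fst measurable_snd.fst measurable_snd.snd
      hm₁ hm₂ hm₃ h1t ht.1 hconv hπ₀ hπ₁ (hQ u₀) (hP₀ u₀) (hP₁ u₀)
    have hbwd := W1_le_of_ae_dist_le π₃ measurable_snd.snd measurable_snd.fst measurable_fst
      hm₃ hm₂ hm₁ ht.1 h1t (hconv.mono fun q hq u => (hq u).trans_eq (add_comm _ _)) hπ₁ hπ₀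
      (hQ u₀) (hP₁ u₀) (hP₀ u₀)
    rw [hW₀, hW₁] at hfwd hbwd
    nlinarith [mul_le_mul_of_nonneg_left hfwd h1t, mul_le_mul_of_nonneg_left hbwd ht.1]
  rw [← sub_le_iff_le_add', Real.mul_iInf_of_nonneg (by nlinarith [ht.1])]
  exact le_ciInf fun u₀ => sub_le_iff_le_add'.2 (key u₀)

/-- **Almost-convexity of the 1-Wasserstein distance along displacement geodesics.**
Let `(X, d)` be a Polish metric space with geodesically convex distance. Let
`Q, P₀, P₁, P_t` have finite first moments, let `t ∈ [0,1]`, and let `π₃` witness that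
`P_t` lies at position `t` on a displacement geodesic from `P₀` to `P₁`. If optimal
couplings attaining `W₁(Q,P₀)` and `W₁(Q,P₁)` exist, then
`W₁(Q,P_t) ≤ (1−t) W₁(Q,P₀) + t W₁(Q,P₁) + 4 t (1−t) inf_{u₀} E_{u∼Q}[d(u,u₀)]`. -/
theorem w1_almost_convex_along_displacement
    {X : Type*} [MetricSpace X] [SeparableSpace X] [CompleteSpace X]
    [MeasurableSpace X] [BorelSpace X]
    (hgeo : ∀ x y z u : X, ∀ s ∈ Set.Icc (0 : ℝ) 1,
      dist x y = s * dist x z → dist y z = (1 - s) * dist x z →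
      dist u y ≤ (1 - s) * dist u x + s * dist u z)
    (Q P₀ P₁ Pt : Measure X)
    [IsProbabilityMeasure Q] [IsProbabilityMeasure P₀]
    [IsProbabilityMeasure P₁] [IsProbabilityMeasure Pt]
    (hQm : ∃ x₀, Integrable (fun x => dist x x₀) Q)
    (h₀m : ∃ x₀, Integrable (fun x => dist x x₀) P₀)
    (h₁m : ∃ x₀, Integrable (fun x => dist x x₀) P₁)
    (htm : ∃ x₀, Integrable (fun x => dist x x₀) Pt)
    (t : ℝ) (ht : t ∈ Set.Icc (0 : ℝ) 1)
    (π₃ : Measure (X × X × X))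
    (hm₁ : π₃.map (fun q => q.1) = P₀)
    (hm₂ : π₃.map (fun q => q.2.1) = Pt)
    (hm₃ : π₃.map (fun q => q.2.2) = P₁)
    (hdisp : ∀ᵐ q ∂π₃, dist q.1 q.2.1 = t * dist q.1 q.2.2 ∧
      dist q.2.1 q.2.2 = (1 - t) * dist q.1 q.2.2)
    (hopt₀ : ∃ π : Measure (X × X), IsCoupling π Q P₀ ∧
      (∫ p, dist p.1 p.2 ∂π) = W1 Q P₀)
    (hopt₁ : ∃ π : Measure (X × X), IsCoupling π Q P₁ ∧
      (∫ p, dist p.1 p.2 ∂π) = W1 Q P₁) :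
    W1 Q Pt ≤ (1 - t) * W1 Q P₀ + t * W1 Q P₁
      + 4 * t * (1 - t) * ⨅ u₀ : X, ∫ u, dist u u₀ ∂Q :=
  w1_almost_convex_along_displacement_general hgeo Q P₀ P₁ Pt hQm h₀m h₁m t ht π₃ hm₁ hm₂ hm₃ hdisp
    hopt₀ hopt₁
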